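/- arXiv:1609.06033 — 3 statements merged into one kernel-verified Lean document; each statement's English description precedes it below -/
import Mathlib

section
/- Let X and Y be real vector spaces equipped with n-norms, and suppose g : X → Y is additive, g(0) = 0, g is ℚ-homogeneous, and g preserves weak n-distance one (‖x₁,…,xₙ‖ = 1 implies ‖g(x₁),…,g(xₙ)‖ = 1, for differences from a common point). Then g preserves all rational weak n-distances: if ‖x₁,…,xₙ‖ = m/k with m, k positive integers, then ‖g(x₁),…,g(xₙ)‖ = m/k. -/
/-- An `n`-norm on a real vector space `X`: a map `(Fin n → X) → ℝ` that vanishes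
exactly on linearly dependent tuples, is permutation invariant, absolutely
homogeneous in the first argument, and satisfies the triangle inequality in the
first argument. -/
structure NNorm (n : ℕ) [NeZero n] (X : Type*) [AddCommGroup X] [Module ℝ X] where
  toFun : (Fin n → X) → ℝ
  eq_zero_iff : ∀ v : Fin n → X, toFun v = 0 ↔ ¬ LinearIndependent ℝ v
  perm_invariant : ∀ (v : Fin n → X) (σ : Equiv.Perm (Fin n)), toFun (v ∘ σ) = toFun v
  smul_first : ∀ (v : Fin n → X) (α : ℝ),
    toFun (Function.update v 0 (α • v 0)) = |α| * toFun v
  add_le_first : ∀ (v : Fin n → X) (x y : X),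
    toFun (Function.update v 0 (x + y)) ≤
      toFun (Function.update v 0 x) + toFun (Function.update v 0 y)

/-- An additive, ℚ-homogeneous map preserving weak n-distance one preserves
all positive rational weak n-distances. -/
theorem preserves_rational_distances {n : ℕ} [NeZero n]
    {X Y : Type*} [AddCommGroup X] [Module ℝ X] [AddCommGroup Y] [Module ℝ Y]
    (NX : NNorm n X) (NY : NNorm n Y)
    (g : X → Y) (hadd : ∀ x y : X, g (x + y) = g x + g y) (h0 : g 0 = 0)
    (hQ : ∀ (q : ℚ) (x : X), g ((q : ℝ) • x) = (q : ℝ) • g x)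
    (hone : ∀ v : Fin n → X, NX.toFun v = 1 → NY.toFun (fun i => g (v i)) = 1) :
    ∀ (v : Fin n → X) (m k : ℕ), 0 < m → 0 < k →
      NX.toFun v = (m : ℝ) / (k : ℝ) →
      NY.toFun (fun i => g (v i)) = (m : ℝ) / (k : ℝ) := by
  intro v m k hm hk hv
  set q : ℚ := (k : ℚ) / (m : ℚ) with hqdef
  have hmR : (0:ℝ) < m := by exact_mod_cast hm
  have hkR : (0:ℝ) < k := by exact_mod_cast hk
  have hq : (q : ℝ) = (k : ℝ) / (m : ℝ) := by push_cast [hqdef]; ring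
  have hu : NX.toFun (Function.update v 0 ((q : ℝ) • v 0)) = 1 := by
    rw [NX.smul_first, hv, hq, abs_of_pos (by positivity)]
    field_simp
  have h1 := hone _ hu
  have heq : (fun i => g (Function.update v 0 ((q : ℝ) • v 0) i)) =
      Function.update (fun i => g (v i)) 0 ((q : ℝ) • g (v 0)) := by
    funext i
    rw [Function.apply_update (fun _ x => g x) v 0 _ i, hQ]
  rw [heq, NY.smul_first, hq, abs_of_pos (by positivity)] at h1
  have hne : (k : ℝ) / (m : ℝ) ≠ 0 := by positivity
  field_simp at h1 ⊢
  linarith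
end

section
/- Let X and Y be real vector spaces equipped with n-norms. Suppose g : X → Y satisfies g(0) = 0, g is additive and ℚ-homogeneous, and g preserves every rational weak n-distance (‖x₁,…,xₙ‖ = q for q ∈ ℚ, q > 0, implies ‖g(x₁),…,g(xₙ)‖ = q). Then g preserves n-collinearity: if ‖x₁,…,xₙ‖ = 0 then ‖g(x₁),…,g(xₙ)‖ = 0. -/
/-!
Let `v` be linearly dependent. Complete a maximal linearly independent subfamily of `v`, on
the remaining indices `S`, by vectors `y` so that the completed family has n-norm `1`. Every
`vᵢ` lies in the span of that subfamily, so the perturbed family `vᵢ + t yᵢ (i ∈ S)` has n-norm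
`|t|^#S`, which is rational for rational `t`; hence so does its image `g vᵢ + t g yᵢ (i ∈ S)`.
The triangle inequality in each argument makes the n-norm continuous along such perturbations,
and letting `t = 1/(m+1) → 0` gives `‖g v₁, …, g vₙ‖ = 0`.
-/

open Filter Topology

theorem exists_notMem_span_of_card_lt_rank {K V : Type*} [DivisionRing K] [AddCommGroup V]
    [Module K V] (T : Finset V) (hT : (T.card : Cardinal) < Module.rank K V) :
    ∃ x, x ∉ Submodule.span K (T : Set V) := by
  by_contra! h
  have htop : Submodule.span K (T : Set V) = ⊤ := eq_top_iff.2 fun x _ => h x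
  have hle := rank_span_finset_le (R := K) T
  rw [htop, rank_top] at hle
  exact hT.not_ge hle

theorem exists_linearIndependent_piecewise {K V ι : Type*} [Field K] [AddCommGroup V]
    [Module K V] [Fintype ι] [DecidableEq ι]
    (hrank : (Fintype.card ι : Cardinal) ≤ Module.rank K V)
    (w : ι → V) (S : Finset ι) (hw : LinearIndepOn K w (↑S)ᶜ) :
    ∃ y, LinearIndependent K (S.piecewise y w) := by
  induction S using Finset.induction_on generalizing w with
  | empty => exact ⟨w, by simpa using hw⟩
  | insert i S hi ih =>
    classical
    have hcard : (((insert i S)ᶜ.image w).card : Cardinal) < Module.rank K V := by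
      refine lt_of_lt_of_le ?_ hrank
      have hlt := (insert i S).card_compl_lt_iff_nonempty.2 ⟨i, S.mem_insert_self i⟩
      exact_mod_cast Finset.card_image_le.trans_lt hlt
    obtain ⟨x, hx⟩ := exists_notMem_span_of_card_lt_rank _ hcard
    have hagree : Set.EqOn w (Function.update w i x) (↑(insert i S))ᶜ := fun j hj =>
      (Function.update_of_ne (by simp_all) x w).symm
    have hw' : LinearIndepOn K (Function.update w i x) (↑S)ᶜ := by
      have h := (hw.congr hagree).insert (x := i) (by
        rwa [← hagree.image_eq, Function.update_self, ← Finset.coe_compl, ← Finset.coe_image])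
      convert h using 1
      ext j
      by_cases hj : j = i <;> simp [hj, hi]
    obtain ⟨y, hy⟩ := ih _ hw'
    refine ⟨Function.update y i x, ?_⟩
    convert hy using 1
    funext j
    by_cases hj : j = i
    · subst hj
      simp [hi]
    · by_cases hjS : j ∈ S <;> simp [hj, hjS]

namespace NNorm

variable {n : ℕ} [NeZero n] {X : Type*} [AddCommGroup X] [Module ℝ X] (N : NNorm n X)

lemma toFun_update_swap (v : Fin n → X) (i : Fin n) (x : X) :
    N.toFun (Function.update v i x) = N.toFun (Function.update (v ∘ Equiv.swap 0 i) 0 x) := by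
  rw [← N.perm_invariant _ (Equiv.swap 0 i), Function.update_comp_equiv, Equiv.symm_swap,
    Equiv.swap_apply_right]

lemma toFun_update_smul (v : Fin n → X) (i : Fin n) (α : ℝ) (x : X) :
    N.toFun (Function.update v i (α • x)) = |α| * N.toFun (Function.update v i x) := by
  rw [N.toFun_update_swap v i, N.toFun_update_swap v i, ← N.smul_first _ α, Function.update_idem,
    Function.update_self]

lemma toFun_update_add_le (v : Fin n → X) (i : Fin n) (x y : X) :
    N.toFun (Function.update v i (x + y)) ≤
      N.toFun (Function.update v i x) + N.toFun (Function.update v i y) := by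
  simpa only [N.toFun_update_swap v i] using N.add_le_first _ x y

lemma abs_toFun_update_add_sub_le (v : Fin n → X) (i : Fin n) (x y : X) :
    |N.toFun (Function.update v i (x + y)) - N.toFun (Function.update v i x)| ≤
      N.toFun (Function.update v i y) := by
  have h := N.toFun_update_add_le v i (x + y) (-y)
  rw [add_neg_cancel_right, ← neg_one_smul ℝ y, toFun_update_smul, abs_neg, abs_one,
    one_mul] at h
  rw [abs_sub_le_iff]
  constructor <;> linarith [N.toFun_update_add_le v i x y]

lemma toFun_nonneg (v : Fin n → X) : 0 ≤ N.toFun v := by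
  simpa using (abs_nonneg _).trans (N.abs_toFun_update_add_sub_le v 0 0 (v 0))

lemma toFun_update_add_of_mem_span (v : Fin n → X) (i : Fin n) {z : X}
    (hz : z ∈ Submodule.span ℝ (v '' {i}ᶜ)) :
    N.toFun (Function.update v i (v i + z)) = N.toFun v := by
  have hzero : N.toFun (Function.update v i z) = 0 := by
    refine (N.eq_zero_iff _).2 fun hind => ?_
    have := hind.notMem_span_image (s := {i}ᶜ) (x := i) (by simp)
    have himage : Function.update v i z '' {i}ᶜ = v '' {i}ᶜ :=
      Set.image_congr fun j hj => Function.update_of_ne hj _ _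
    rw [Function.update_self, himage] at this
    exact this hz
  have h := N.abs_toFun_update_add_sub_le v i (v i) z
  rwa [hzero, Function.update_eq_self, abs_nonpos_iff, sub_eq_zero] at h

lemma toFun_piecewise_smul (w : Fin n → X) (c : ℝ) (S : Finset (Fin n)) :
    N.toFun (S.piecewise (c • w) w) = |c| ^ S.card * N.toFun w := by
  induction S using Finset.induction_on with
  | empty => simp
  | insert i S hi ih =>
    have hPi : S.piecewise (c • w) w i = w i := S.piecewise_eq_of_notMem _ _ hi
    rw [Finset.piecewise_insert, Pi.smul_apply, ← hPi, toFun_update_smul, Function.update_eq_self,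
      ih, Finset.card_insert_of_notMem hi, pow_succ]
    ring

lemma toFun_piecewise_add_of_mem_span (w d : Fin n → X) (S : Finset (Fin n))
    (hd : ∀ i ∈ S, d i ∈ Submodule.span ℝ (w '' (↑S)ᶜ)) :
    N.toFun (S.piecewise (w + d) w) = N.toFun w := by
  induction S using Finset.induction_on with
  | empty => simp
  | insert i S hi ih =>
    set P := S.piecewise (w + d) w
    have hPi : P i = w i := S.piecewise_eq_of_notMem _ _ hi
    have hcompl : (↑(insert i S) : Set (Fin n))ᶜ ⊆ (↑S)ᶜ :=
      Set.compl_subset_compl.2 (by simp [Set.subset_insert])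
    have hspan : w '' (↑(insert i S))ᶜ ⊆ P '' {i}ᶜ := by
      rintro _ ⟨j, hj, rfl⟩
      simp only [Finset.coe_insert, Set.mem_compl_iff, Set.mem_insert_iff, not_or,
        Finset.mem_coe] at hj
      exact ⟨j, hj.1, S.piecewise_eq_of_notMem _ _ hj.2⟩
    rw [Finset.piecewise_insert, Pi.add_apply, ← hPi,
      N.toFun_update_add_of_mem_span P i (Submodule.span_mono hspan (hd i (S.mem_insert_self i))),
      ih fun j hj => Submodule.span_mono (Set.image_mono hcompl) (hd j (S.mem_insert_of_mem hj))]

lemma exists_abs_toFun_piecewise_add_smul_sub_le (a b : Fin n → X) (S : Finset (Fin n)) :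
    ∃ C, ∀ t : ℝ, |t| ≤ 1 →
      |N.toFun (S.piecewise (a + t • b) a) - N.toFun a| ≤ C * |t| := by
  induction S using Finset.induction_on generalizing a with
  | empty => exact ⟨0, fun t _ => by simp⟩
  | insert i S hi ih =>
    set a' := Function.update a i (b i)
    obtain ⟨C₁, hC₁⟩ := ih a
    obtain ⟨C₂, hC₂⟩ := ih a'
    refine ⟨N.toFun a' + |C₂| + C₁, fun t ht => ?_⟩
    set P := S.piecewise (a + t • b) a
    have hPi : Function.update P i (a i) = P := by
      rw [← S.piecewise_eq_of_notMem (a + t • b) a hi, Function.update_eq_self]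
    -- replacing the `i`-th entry by `b i` leaves a perturbation of `a'` along `S` alone
    have hP' : Function.update P i (b i) = S.piecewise (a' + t • b) a' := by
      funext j
      by_cases hj : j = i
      · subst hj
        simp [a', hi]
      · by_cases hjS : j ∈ S <;> simp [P, a', hj, hjS]
    have hstep : |N.toFun (Function.update P i (a i + t • b i)) - N.toFun P| ≤
        |t| * N.toFun (S.piecewise (a' + t • b) a') := by
      have h := N.abs_toFun_update_add_sub_le P i (a i) (t • b i)
      rwa [toFun_update_smul, hP', hPi] at h
    have hbound : |t| * (C₂ * |t|) ≤ |t| * |C₂| :=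
      mul_le_mul_of_nonneg_left (by nlinarith [le_abs_self C₂, abs_nonneg t, abs_nonneg C₂])
        (abs_nonneg t)
    have h₂ := (abs_le.1 (hC₂ t ht)).2
    rw [Finset.piecewise_insert, Pi.add_apply, Pi.smul_apply]
    calc _ ≤ |N.toFun (Function.update P i (a i + t • b i)) - N.toFun P|
          + |N.toFun P - N.toFun a| := abs_sub_le _ _ _
      _ ≤ |t| * N.toFun (S.piecewise (a' + t • b) a') + C₁ * |t| :=
          add_le_add hstep (hC₁ t ht)
      _ ≤ (N.toFun a' + |C₂| + C₁) * |t| := by nlinarith [abs_nonneg t]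

lemma tendsto_toFun_piecewise_add_smul (a b : Fin n → X) (S : Finset (Fin n)) :
    Tendsto (fun t : ℝ => N.toFun (S.piecewise (a + t • b) a)) (𝓝 0) (𝓝 (N.toFun a)) := by
  obtain ⟨C, hC⟩ := N.exists_abs_toFun_piecewise_add_smul_sub_le a b S
  have hlim : Tendsto (fun t : ℝ => C * |t|) (𝓝 0) (𝓝 0) := by
    simpa using (continuous_abs.tendsto (0 : ℝ)).const_mul C
  refine tendsto_iff_norm_sub_tendsto_zero.2 (squeeze_zero' (Eventually.of_forall
    fun t => norm_nonneg _) ?_ hlim)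
  filter_upwards [eventually_abs_sub_lt 0 one_pos] with t ht
  rw [sub_zero] at ht
  exact hC t ht.le

lemma exists_toFun_piecewise_eq_one (hrank : (n : Cardinal) ≤ Module.rank ℝ X) (v : Fin n → X)
    {S : Finset (Fin n)} (hS : S.Nonempty) (hv : LinearIndepOn ℝ v (↑S)ᶜ) :
    ∃ y, N.toFun (S.piecewise y v) = 1 := by
  obtain ⟨y, hy⟩ := exists_linearIndependent_piecewise (by simpa using hrank) v S hv
  obtain ⟨i, hi⟩ := hS
  set c := N.toFun (S.piecewise y v)
  have hc : 0 < c := (N.toFun_nonneg _).lt_of_ne fun h => (N.eq_zero_iff _).1 h.symm hy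
  refine ⟨Function.update y i (c⁻¹ • y i), ?_⟩
  rw [← S.update_piecewise_of_mem (f := y) (g := v) hi, ← S.piecewise_eq_of_mem y v hi,
    toFun_update_smul, Function.update_eq_self, abs_of_pos (inv_pos.2 hc),
    inv_mul_cancel₀ hc.ne']

lemma exists_toFun_piecewise_add_smul_eq_pow (hrank : (n : Cardinal) ≤ Module.rank ℝ X)
    {v : Fin n → X} (hv : ¬ LinearIndependent ℝ v) :
    ∃ S : Finset (Fin n), S.Nonempty ∧ ∃ y, ∀ t : ℝ,
      N.toFun (S.piecewise (v + t • y) v) = |t| ^ S.card := by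
  classical
  obtain ⟨s, hs, hmax⟩ := exists_maximal_linearIndepOn ℝ v
  set S := sᶜ.toFinset
  have hSc : (S : Set (Fin n))ᶜ = s := by simp [S]
  have hspan : ∀ i, v i ∈ Submodule.span ℝ (v '' s) := by
    intro i
    by_cases hi : i ∈ s
    · exact Submodule.subset_span (Set.mem_image_of_mem v hi)
    · obtain ⟨c, hc, hcv⟩ := hmax i hi
      simpa [smul_smul, inv_mul_cancel₀ hc] using Submodule.smul_mem _ c⁻¹ hcv
  have hS : S.Nonempty := by
    rw [Finset.nonempty_iff_ne_empty]
    rintro hempty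
    rw [hempty, Finset.coe_empty, Set.compl_empty] at hSc
    exact hv (linearIndepOn_univ_iff.1 (hSc ▸ hs))
  obtain ⟨y, hy⟩ := N.exists_toFun_piecewise_eq_one hrank v hS (hSc ▸ hs)
  refine ⟨S, hS, y, fun t => ?_⟩
  have hshift : S.piecewise (v + t • y) v =
      S.piecewise (S.piecewise (t • y) v + v) (S.piecewise (t • y) v) := by
    funext j
    by_cases hj : j ∈ S <;> simp [hj, add_comm]
  have hscale :
      S.piecewise (t • y) v = S.piecewise (t • S.piecewise y v) (S.piecewise y v) := by
    funext j
    by_cases hj : j ∈ S <;> simp [hj]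
  have himage : S.piecewise (t • y) v '' (↑S)ᶜ = v '' s := by
    rw [← hSc]
    exact Set.image_congr fun j hj => S.piecewise_eq_of_notMem _ _ hj
  rw [hshift, N.toFun_piecewise_add_of_mem_span _ _ _ fun i _ => himage ▸ hspan i, hscale,
    toFun_piecewise_smul, hy, mul_one]

end NNorm

theorem preserves_n_collinearity_general {n : ℕ} [NeZero n]
    {X Y : Type*} [AddCommGroup X] [Module ℝ X] [AddCommGroup Y] [Module ℝ Y]
    (NX : NNorm n X) (NY : NNorm n Y)
    (hrank : (n : Cardinal) ≤ Module.rank ℝ X)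
    (g : X → Y) (hadd : ∀ x y : X, g (x + y) = g x + g y)
    (hQ : ∀ (q : ℚ) (x : X), g ((q : ℝ) • x) = (q : ℝ) • g x)
    (hq : ∀ (v : Fin n → X) (q : ℚ), 0 < q → NX.toFun v = (q : ℝ) →
      NY.toFun (fun i => g (v i)) = (q : ℝ)) :
    ∀ v : Fin n → X, NX.toFun v = 0 → NY.toFun (fun i => g (v i)) = 0 := by
  intro v hv
  obtain ⟨S, hS, y, hNX⟩ :=
    NX.exists_toFun_piecewise_add_smul_eq_pow hrank ((NX.eq_zero_iff v).1 hv)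
  set a := fun i => g (v i)
  set b := fun i => g (y i)
  have hNY : ∀ q : ℚ, 0 < q →
      NY.toFun (S.piecewise (a + (q : ℝ) • b) a) = (q : ℝ) ^ S.card := by
    intro q hq0
    have hg : (fun i => g (S.piecewise (v + (q : ℝ) • y) v i)) =
        S.piecewise (a + (q : ℝ) • b) a := by
      funext i
      by_cases hi : i ∈ S <;> simp [hi, a, b, hadd, hQ]
    rw [← hg]
    exact_mod_cast hq _ (q ^ S.card) (pow_pos hq0 _)
      (by rw [hNX, abs_of_pos (by exact_mod_cast hq0)]; push_cast; rfl)
  set t : ℕ → ℚ := fun m => 1 / (m + 1)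
  have ht : Tendsto (fun m => (t m : ℝ)) atTop (𝓝 0) := by
    simpa [t] using tendsto_one_div_add_atTop_nhds_zero_nat (𝕜 := ℝ)
  have hpow : Tendsto (fun m => (t m : ℝ) ^ S.card) atTop (𝓝 0) := by
    simpa [zero_pow hS.card_ne_zero] using ht.pow S.card
  refine tendsto_nhds_unique ((NY.tendsto_toFun_piecewise_add_smul a b S).comp ht) ?_
  exact hpow.congr fun m => (hNY (t m) (by positivity)).symm

/-- An additive, ℚ-homogeneous map preserving all positive rational weak
n-distances preserves n-collinearity. -/
theorem preserves_n_collinearity {n : ℕ} [NeZero n]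
    {X Y : Type*} [AddCommGroup X] [Module ℝ X] [AddCommGroup Y] [Module ℝ Y]
    (NX : NNorm n X) (NY : NNorm n Y)
    (hrank : (n : Cardinal) ≤ Module.rank ℝ X)
    (g : X → Y) (h0 : g 0 = 0) (hadd : ∀ x y : X, g (x + y) = g x + g y)
    (hQ : ∀ (q : ℚ) (x : X), g ((q : ℝ) • x) = (q : ℝ) • g x)
    (hq : ∀ (v : Fin n → X) (q : ℚ), 0 < q → NX.toFun v = (q : ℝ) →
      NY.toFun (fun i => g (v i)) = (q : ℝ)) :
    ∀ v : Fin n → X, NX.toFun v = 0 → NY.toFun (fun i => g (v i)) = 0 :=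
  preserves_n_collinearity_general NX NY hrank g hadd hQ hq
end

section
/- Let X and Y be real vector spaces with n-norms. Suppose g : X → Y is injective, additive, and preserves 2-collinearity, and that on each 1-dimensional subspace g acts through a scalar function, i.e., for each x ∈ X there is φ_x : ℝ → ℝ with g(tx) = φ_x(t) g(x) for all t ∈ ℝ. If x, y ∈ X are linearly independent and g(x), g(y) are linearly independent, then the function φ with g(tx) = φ(t)g(x) and the function φ₁ with g(ty) = φ₁(t)g(y) satisfy φ(t) = φ₁(t) for all t ∈ ℝ, and moreover φ is multiplicative: φ(st) = φ(s)φ(t) for all s, t ∈ ℝ. -/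
/-- The scalar functions attached to an injective, additive, 2-collinearity
preserving map agree on linearly independent directions and are
multiplicative. -/
theorem phi_well_defined_and_multiplicative {n : ℕ} [NeZero n]
    {X Y : Type*} [AddCommGroup X] [Module ℝ X] [AddCommGroup Y] [Module ℝ Y]
    (NX : NNorm n X) (NY : NNorm n Y)
    (g : X → Y) (hinj : Function.Injective g)
    (hadd : ∀ u v : X, g (u + v) = g u + g v)
    (hcol : ∀ p q r : X, Collinear ℝ {p, q, r} → Collinear ℝ {g p, g q, g r})
    (x y : X) (hxy : LinearIndependent ℝ ![x, y])
    (hgxy : LinearIndependent ℝ ![g x, g y])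
    (φ φ₁ : ℝ → ℝ)
    (hφ : ∀ t : ℝ, g (t • x) = φ t • g x)
    (hφ₁ : ∀ t : ℝ, g (t • y) = φ₁ t • g y) :
    (∀ t : ℝ, φ t = φ₁ t) ∧ (∀ s t : ℝ, φ (s * t) = φ s * φ t) := by

  have g0 : g 0 = 0 := by
    have := hadd 0 0
    simp only [add_zero] at this
    exact add_eq_left.mp this.symm
  have hgy0 : g y ≠ 0 := hgxy.ne_zero 1
  -- source collinearity of 0, z, t • z
  have hsrc : ∀ (z : X) (t : ℝ), Collinear ℝ ({0, z, t • z} : Set X) := by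
    intro z t
    rw [collinear_iff_of_mem (Set.mem_insert 0 _)]
    refine ⟨z, ?_⟩
    rintro p (rfl | rfl | rfl)
    · exact ⟨0, by simp⟩
    · exact ⟨1, by simp⟩
    · exact ⟨t, by simp⟩
  -- extraction from target collinearity containing 0
  have hext : ∀ (u w : Y), u ≠ 0 → Collinear ℝ ({0, u, w} : Set Y) → ∃ c : ℝ, w = c • u := by
    intro u w hu hc
    rw [collinear_iff_of_mem (Set.mem_insert 0 _)] at hc
    obtain ⟨v, hv⟩ := hc
    obtain ⟨a, ha⟩ := hv u (by simp)
    obtain ⟨b, hb⟩ := hv w (by simp)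
    simp only [vadd_eq_add, add_zero] at ha hb
    have ha0 : a ≠ 0 := by rintro rfl; simp at ha; exact hu ha
    exact ⟨b / a, by rw [hb, ha, smul_smul, div_mul_cancel₀ _ ha0]⟩
  have key : ∀ s t : ℝ, φ₁ (t * s) = φ t * φ₁ s := by
    intro s t
    have hc := hcol 0 (x + s • y) (t • (x + s • y)) (hsrc _ t)
    rw [g0] at hc
    have h1 : g (x + s • y) = g x + φ₁ s • g y := by rw [hadd, hφ₁]
    have h2 : g (t • (x + s • y)) = φ t • g x + φ₁ (t * s) • g y := by
      rw [smul_add, smul_smul, hadd, hφ, hφ₁]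
    rw [h1, h2] at hc
    have hu : g x + φ₁ s • g y ≠ 0 := by
      intro h
      have : (1 : ℝ) • g x + φ₁ s • g y = 0 := by simpa using h
      exact one_ne_zero (hgxy.eq_zero_of_pair this).1
    obtain ⟨c, hcw⟩ := hext _ _ hu hc
    rw [smul_add, smul_smul] at hcw
    have h0 : (φ t - c) • g x + (φ₁ (t * s) - c * φ₁ s) • g y = 0 := by
      have h := sub_eq_zero.mpr hcw
      rw [sub_smul, sub_smul, ← h]
      abel
    obtain ⟨e1, e2⟩ := hgxy.eq_zero_of_pair h0
    have hc' : c = φ t := by linarith [sub_eq_zero.mp e1]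
    have := sub_eq_zero.mp e2
    rw [this, hc']
  have hφ₁1 : φ₁ 1 = 1 := by
    have := hφ₁ 1
    rw [one_smul] at this
    by_contra h
    have : (1 - φ₁ 1) • g y = 0 := by rw [sub_smul, one_smul, ← this, sub_self]
    rcases smul_eq_zero.mp this with h' | h'
    · exact h (by linarith [sub_eq_zero.mp h'])
    · exact hgy0 h'
  have heq : ∀ t : ℝ, φ t = φ₁ t := by
    intro t
    have := key 1 t
    rw [mul_one, hφ₁1, mul_one] at this
    exact this.symm
  refine ⟨heq, fun s t => ?_⟩
  have := key t s
  rw [heq (s * t), this, heq t]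
end
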